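/- arXiv:1302.1632 — 5 statements merged into one kernel-verified Lean document; each statement's English description precedes it below -/
import Mathlib

section
/- Let p, q, k, l be integers with p, q ≥ 1, 0 < k < p, 0 < l < q. Set α = exp(iπk/p), β = exp(iπl/q), and let C = diag(α², 1, α⁻²) and D = diag(β², 1, β⁻²) be diagonal 3×3 complex matrices. Then for every t ∈ ℂ such that (t^p − 1)(t^q − 1)(t^{2q} − 2cos(2πk/p)·t^q + 1)(t^{2p} − 2cos(2πl/q)·t^p + 1) ≠ 0, one has det(Σ_{j=0}^{p−1} t^{qj} C^j) / det(t^p·D − I) = (t^{pq} − 1)³ / ((t^p − 1)(t^q − 1)(t^{2q} − 2cos(2πk/p)·t^q + 1)(t^{2p} − 2cos(2πl/q)·t^p + 1)). -/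
open Matrix

private lemma tk_pow_root (p k : ℕ) (hp : 1 ≤ p) (α : ℂ)
    (hα : α = Complex.exp (Complex.I * Real.pi * k / p)) :
    (α ^ 2) ^ p = 1 := by
  have hp0 : (p : ℂ) ≠ 0 := Nat.cast_ne_zero.mpr (by omega)
  have h : (α ^ 2) ^ p = Complex.exp ((2 * p : ℕ) * (Complex.I * Real.pi * k / p)) := by
    rw [hα, Complex.exp_nat_mul, ← pow_mul, mul_comm 2 p, pow_mul]
  rw [h]
  have harg : ((2 * p : ℕ) : ℂ) * (Complex.I * Real.pi * k / p)
      = (k : ℤ) * (2 * Real.pi * Complex.I) := by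
    push_cast
    field_simp
  rw [harg, Complex.exp_int_mul_two_pi_mul_I]

private lemma tk_cos (p k : ℕ) (hp : 1 ≤ p) (α : ℂ)
    (hα : α = Complex.exp (Complex.I * Real.pi * k / p)) :
    α ^ 2 + (α ^ 2)⁻¹ = 2 * (Real.cos (2 * Real.pi * k / p) : ℂ) := by
  have hp0 : (p : ℂ) ≠ 0 := Nat.cast_ne_zero.mpr (by omega)
  have h1 : α ^ 2 = Complex.exp (((2 * Real.pi * k / p : ℝ) : ℂ) * Complex.I) := by
    rw [hα, ← Complex.exp_nat_mul]
    congr 1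
    push_cast
    field_simp
  rw [h1, ← Complex.exp_neg, Complex.exp_mul_I, ← neg_mul, Complex.exp_mul_I]
  rw [← Complex.ofReal_cos]
  simp [Complex.cos_neg, Complex.sin_neg]
  ring

private lemma tk_det_sum (a t : ℂ) (p q : ℕ) :
    (∑ j ∈ Finset.range p,
        t ^ (q * j) • (Matrix.diagonal ![a ^ 2, 1, a⁻¹ ^ 2] : Matrix (Fin 3) (Fin 3) ℂ) ^ j).det
    = (∑ j ∈ Finset.range p, (t ^ q * a ^ 2) ^ j) * (∑ j ∈ Finset.range p, (t ^ q) ^ j) *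
      (∑ j ∈ Finset.range p, (t ^ q * (a ^ 2)⁻¹) ^ j) := by
  have h : (∑ j ∈ Finset.range p,
        t ^ (q * j) • (Matrix.diagonal ![a ^ 2, 1, a⁻¹ ^ 2] : Matrix (Fin 3) (Fin 3) ℂ) ^ j)
      = Matrix.diagonal (∑ j ∈ Finset.range p, t ^ (q * j) • (![a ^ 2, 1, a⁻¹ ^ 2] ^ j)) := by
    simp only [Matrix.diagonal_pow, ← Matrix.diagonal_smul]
    exact (map_sum (Matrix.diagonalAddMonoidHom (Fin 3) ℂ) _ _).symm
  rw [h, Matrix.det_diagonal, Fin.prod_univ_three]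
  simp only [Finset.sum_apply, Pi.smul_apply, Pi.pow_apply]
  simp [mul_pow, ← pow_mul, inv_pow, smul_eq_mul]

private lemma tk_det_den (b t : ℂ) (p : ℕ) :
    (t ^ p • (Matrix.diagonal ![b ^ 2, 1, b⁻¹ ^ 2] : Matrix (Fin 3) (Fin 3) ℂ) - 1).det
    = (t ^ p * b ^ 2 - 1) * (t ^ p - 1) * (t ^ p * (b ^ 2)⁻¹ - 1) := by
  have h : (t ^ p • (Matrix.diagonal ![b ^ 2, 1, b⁻¹ ^ 2] : Matrix (Fin 3) (Fin 3) ℂ) - 1)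
      = Matrix.diagonal ![t ^ p * b ^ 2 - 1, t ^ p - 1, t ^ p * (b ^ 2)⁻¹ - 1] := by
    rw [← Matrix.diagonal_smul, ← Matrix.diagonal_one, Matrix.diagonal_sub]
    refine congrArg _ (funext fun i => ?_)
    fin_cases i <;> simp [inv_pow]
  rw [h, Matrix.det_diagonal, Fin.prod_univ_three]
  simp

/-- Computational content of Theorem 3.3 (torus knots): the twisted Alexander
polynomial with the adjoint action of the `(p,q)`-torus knot equals
`(t^{pq}-1)^3 / ((t^p-1)(t^q-1)(t^{2q}-2cos(2πk/p)t^q+1)(t^{2p}-2cos(2πl/q)t^p+1))`. -/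
theorem torus_knot_twisted_alexander_adjoint
    (p q k l : ℕ) (hp : 1 ≤ p) (hq : 1 ≤ q)
    (hk0 : 0 < k) (hkp : k < p) (hl0 : 0 < l) (hlq : l < q)
    (α β : ℂ)
    (hα : α = Complex.exp (Complex.I * Real.pi * k / p))
    (hβ : β = Complex.exp (Complex.I * Real.pi * l / q))
    (C D : Matrix (Fin 3) (Fin 3) ℂ)
    (hC : C = Matrix.diagonal ![α ^ 2, 1, α⁻¹ ^ 2])
    (hD : D = Matrix.diagonal ![β ^ 2, 1, β⁻¹ ^ 2])
    (t : ℂ)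
    (ht : (t ^ p - 1) * (t ^ q - 1) *
        (t ^ (2 * q) - 2 * (Real.cos (2 * Real.pi * k / p) : ℂ) * t ^ q + 1) *
        (t ^ (2 * p) - 2 * (Real.cos (2 * Real.pi * l / q) : ℂ) * t ^ p + 1) ≠ 0) :
    (∑ j ∈ Finset.range p, t ^ (q * j) • C ^ j).det / (t ^ p • D - 1).det =
      (t ^ (p * q) - 1) ^ 3 /
        ((t ^ p - 1) * (t ^ q - 1) *
          (t ^ (2 * q) - 2 * (Real.cos (2 * Real.pi * k / p) : ℂ) * t ^ q + 1) *
          (t ^ (2 * p) - 2 * (Real.cos (2 * Real.pi * l / q) : ℂ) * t ^ p + 1)) := by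
  have hαne : α ≠ 0 := by rw [hα]; exact Complex.exp_ne_zero _
  have hβne : β ≠ 0 := by rw [hβ]; exact Complex.exp_ne_zero _
  have hane : α ^ 2 ≠ 0 := pow_ne_zero _ hαne
  have hbne : β ^ 2 ≠ 0 := pow_ne_zero _ hβne
  have hap : (α ^ 2) ^ p = 1 := tk_pow_root p k hp α hα
  have hbq : (β ^ 2) ^ q = 1 := tk_pow_root q l hq β hβ
  have hcosk : 2 * (Real.cos (2 * Real.pi * k / p) : ℂ) = α ^ 2 + (α ^ 2)⁻¹ :=
    (tk_cos p k hp α hα).symm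
  have hcosl : 2 * (Real.cos (2 * Real.pi * l / q) : ℂ) = β ^ 2 + (β ^ 2)⁻¹ :=
    (tk_cos q l hq β hβ).symm
  -- factorizations of the quadratic factors
  have hfacK : t ^ (2 * q) - 2 * (Real.cos (2 * Real.pi * k / p) : ℂ) * t ^ q + 1
      = (t ^ q * α ^ 2 - 1) * (t ^ q * (α ^ 2)⁻¹ - 1) := by
    rw [hcosk, two_mul, pow_add]
    field_simp
    ring
  have hfacL : t ^ (2 * p) - 2 * (Real.cos (2 * Real.pi * l / q) : ℂ) * t ^ p + 1
      = (t ^ p * β ^ 2 - 1) * (t ^ p * (β ^ 2)⁻¹ - 1) := by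
    rw [hcosl, two_mul, pow_add]
    field_simp
    ring
  -- nonvanishing of all factors
  have hA : t ^ p - 1 ≠ 0 := fun h => ht (by rw [h]; ring)
  have hB : t ^ q - 1 ≠ 0 := fun h => ht (by rw [h]; ring)
  have hK : (t ^ q * α ^ 2 - 1) * (t ^ q * (α ^ 2)⁻¹ - 1) ≠ 0 := by
    rw [← hfacK]; exact fun h => ht (by rw [h]; ring)
  have hL : (t ^ p * β ^ 2 - 1) * (t ^ p * (β ^ 2)⁻¹ - 1) ≠ 0 := by
    rw [← hfacL]; exact fun h => ht (by rw [h]; ring)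
  have hK1 : t ^ q * α ^ 2 - 1 ≠ 0 := (mul_ne_zero_iff.mp hK).1
  have hK2 : t ^ q * (α ^ 2)⁻¹ - 1 ≠ 0 := (mul_ne_zero_iff.mp hK).2
  have hL1 : t ^ p * β ^ 2 - 1 ≠ 0 := (mul_ne_zero_iff.mp hL).1
  have hL2 : t ^ p * (β ^ 2)⁻¹ - 1 ≠ 0 := (mul_ne_zero_iff.mp hL).2
  -- geometric sums
  have hgs0 : (∑ j ∈ Finset.range p, (t ^ q) ^ j) = (t ^ (p * q) - 1) / (t ^ q - 1) := by
    rw [geom_sum_eq (fun h => hB (by rw [h]; ring)), ← pow_mul, mul_comm q p]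
  have hgs1 : (∑ j ∈ Finset.range p, (t ^ q * α ^ 2) ^ j)
      = (t ^ (p * q) - 1) / (t ^ q * α ^ 2 - 1) := by
    rw [geom_sum_eq (fun h => hK1 (by rw [h]; ring)), mul_pow, hap, mul_one, ← pow_mul,
      mul_comm q p]
  have hgs2 : (∑ j ∈ Finset.range p, (t ^ q * (α ^ 2)⁻¹) ^ j)
      = (t ^ (p * q) - 1) / (t ^ q * (α ^ 2)⁻¹ - 1) := by
    have : ((α ^ 2)⁻¹) ^ p = 1 := by rw [inv_pow, hap, inv_one]
    rw [geom_sum_eq (fun h => hK2 (by rw [h]; ring)), mul_pow, this, mul_one, ← pow_mul,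
      mul_comm q p]
  rw [hC, hD, tk_det_sum, tk_det_den, hgs0, hgs1, hgs2, hfacK, hfacL]
  field_simp
end

section
/- Let p, q, k, l be integers with p, q ≥ 1, 0 < k < p, 0 < l < q. Define f(t) = (t^{pq} − 1)³ / ((t^p − 1)(t^q − 1)(t^{2q} − 2cos(2πk/p)·t^q + 1)(t^{2p} − 2cos(2πl/q)·t^p + 1)) for complex t at which the denominator is nonzero. Then as t → 1 with t ≠ 1, the quotient f(t)/(t − 1) tends to p²q² / (16 sin²(πk/p) sin²(πl/q)); consequently −lim_{t→1} f(t)/(t−1) = −p²q²/(16 sin²(πk/p) sin²(πl/q)). -/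
open Filter

/-- Corollary 3.5 (torus knots): the non-abelian Reidemeister torsion of the
`(p,q)`-torus knot is `−p²q²/(16 sin²(πk/p) sin²(πl/q))`, obtained as
`−lim_{t→1} Δ_{K,Ad∘ρ}(t)/(t−1)`. -/
theorem torus_knot_nonabelian_reidemeister_torsion
    (p q k l : ℕ) (hp : 1 ≤ p) (hq : 1 ≤ q)
    (hk0 : 0 < k) (hkp : k < p) (hl0 : 0 < l) (hlq : l < q)
    (f : ℂ → ℂ)
    (hf : ∀ t : ℂ, f t = (t ^ (p * q) - 1) ^ 3 /
        ((t ^ p - 1) * (t ^ q - 1) *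
          (t ^ (2 * q) - 2 * (Real.cos (2 * Real.pi * k / p) : ℂ) * t ^ q + 1) *
          (t ^ (2 * p) - 2 * (Real.cos (2 * Real.pi * l / q) : ℂ) * t ^ p + 1))) :
    Tendsto (fun t : ℂ => f t / (t - 1))
      (nhdsWithin 1 {t : ℂ | t ≠ 1 ∧
        (t ^ p - 1) * (t ^ q - 1) *
          (t ^ (2 * q) - 2 * (Real.cos (2 * Real.pi * k / p) : ℂ) * t ^ q + 1) *
          (t ^ (2 * p) - 2 * (Real.cos (2 * Real.pi * l / q) : ℂ) * t ^ p + 1) ≠ 0})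
      (nhds ((p ^ 2 * q ^ 2 : ℂ) /
        (16 * (Real.sin (Real.pi * k / p) : ℂ) ^ 2 * (Real.sin (Real.pi * l / q) : ℂ) ^ 2)))
    ∧
    Tendsto (fun t : ℂ => -(f t / (t - 1)))
      (nhdsWithin 1 {t : ℂ | t ≠ 1 ∧
        (t ^ p - 1) * (t ^ q - 1) *
          (t ^ (2 * q) - 2 * (Real.cos (2 * Real.pi * k / p) : ℂ) * t ^ q + 1) *
          (t ^ (2 * p) - 2 * (Real.cos (2 * Real.pi * l / q) : ℂ) * t ^ p + 1) ≠ 0})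
      (nhds (-((p ^ 2 * q ^ 2 : ℂ) /
        (16 * (Real.sin (Real.pi * k / p) : ℂ) ^ 2 * (Real.sin (Real.pi * l / q) : ℂ) ^ 2)))) := by
  set c₁ : ℂ := (Real.cos (2 * Real.pi * k / p) : ℂ) with hc₁def
  set c₂ : ℂ := (Real.cos (2 * Real.pi * l / q) : ℂ) with hc₂def
  set s₁ : ℝ := Real.sin (Real.pi * k / p) with hs₁def
  set s₂ : ℝ := Real.sin (Real.pi * l / q) with hs₂def
  have hp0 : (0:ℝ) < p := by exact_mod_cast hp
  have hq0 : (0:ℝ) < q := by exact_mod_cast hq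
  have hs₁pos : 0 < s₁ := by
    apply Real.sin_pos_of_pos_of_lt_pi
    · positivity
    · rw [div_lt_iff₀ hp0]
      have : (k:ℝ) < p := by exact_mod_cast hkp
      nlinarith [Real.pi_pos]
  have hs₂pos : 0 < s₂ := by
    apply Real.sin_pos_of_pos_of_lt_pi
    · positivity
    · rw [div_lt_iff₀ hq0]
      have : (l:ℝ) < q := by exact_mod_cast hlq
      nlinarith [Real.pi_pos]
  have hd₁ : (2:ℝ) - 2 * Real.cos (2 * Real.pi * k / p) = 4 * s₁ ^ 2 := by
    have h2 : 2 * Real.pi * k / p = 2 * (Real.pi * k / p) := by ring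
    rw [h2, Real.cos_two_mul']
    have := Real.sin_sq_add_cos_sq (Real.pi * k / p)
    rw [hs₁def]; nlinarith
  have hd₂ : (2:ℝ) - 2 * Real.cos (2 * Real.pi * l / q) = 4 * s₂ ^ 2 := by
    have h2 : 2 * Real.pi * l / q = 2 * (Real.pi * l / q) := by ring
    rw [h2, Real.cos_two_mul']
    have := Real.sin_sq_add_cos_sq (Real.pi * l / q)
    rw [hs₂def]; nlinarith
  have e₁ : (2 : ℂ) - 2 * c₁ = 4 * (s₁ : ℂ) ^ 2 := by
    rw [hc₁def]; exact_mod_cast congrArg (Complex.ofReal) hd₁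
  have e₂ : (2 : ℂ) - 2 * c₂ = 4 * (s₂ : ℂ) ^ 2 := by
    rw [hc₂def]; exact_mod_cast congrArg (Complex.ofReal) hd₂
  have hpc : (p : ℂ) ≠ 0 := Nat.cast_ne_zero.mpr (by omega)
  have hqc : (q : ℂ) ≠ 0 := Nat.cast_ne_zero.mpr (by omega)
  have hs₁c : (s₁ : ℂ) ≠ 0 := by exact_mod_cast hs₁pos.ne'
  have hs₂c : (s₂ : ℂ) ≠ 0 := by exact_mod_cast hs₂pos.ne'
  -- the function after cancelling the (t-1) factors
  set G : ℂ → ℂ := fun t =>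
    (∑ i ∈ Finset.range (p * q), t ^ i) ^ 3 /
      ((∑ i ∈ Finset.range p, t ^ i) * (∑ i ∈ Finset.range q, t ^ i) *
        (t ^ (2 * q) - 2 * c₁ * t ^ q + 1) * (t ^ (2 * p) - 2 * c₂ * t ^ p + 1)) with hGdef
  set L : ℂ := (p ^ 2 * q ^ 2 : ℂ) / (16 * (s₁ : ℂ) ^ 2 * (s₂ : ℂ) ^ 2) with hLdef
  have hG1 : G 1 = L := by
    have hG1' : G 1 = ((p * q : ℕ) : ℂ) ^ 3 /
        ((p : ℂ) * q * (1 - 2 * c₁ + 1) * (1 - 2 * c₂ + 1)) := by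
      simp [hGdef]
    rw [hG1']
    have r₁ : (1 : ℂ) - 2 * c₁ + 1 = 4 * (s₁ : ℂ) ^ 2 := by rw [← e₁]; ring
    have r₂ : (1 : ℂ) - 2 * c₂ + 1 = 4 * (s₂ : ℂ) ^ 2 := by rw [← e₂]; ring
    rw [r₁, r₂, hLdef]
    push_cast
    rw [div_eq_div_iff]
    · ring
    · exact mul_ne_zero (mul_ne_zero (mul_ne_zero hpc hqc)
        (mul_ne_zero (by norm_num : (4:ℂ) ≠ 0) (pow_ne_zero _ hs₁c)))
        (mul_ne_zero (by norm_num : (4:ℂ) ≠ 0) (pow_ne_zero _ hs₂c))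
    · exact mul_ne_zero (mul_ne_zero (by norm_num) (pow_ne_zero _ hs₁c)) (pow_ne_zero _ hs₂c)
  have hden1 : ((∑ i ∈ Finset.range p, (1:ℂ) ^ i) * (∑ i ∈ Finset.range q, (1:ℂ) ^ i) *
        ((1:ℂ) ^ (2 * q) - 2 * c₁ * (1:ℂ) ^ q + 1) *
        ((1:ℂ) ^ (2 * p) - 2 * c₂ * (1:ℂ) ^ p + 1)) ≠ 0 := by
    have r₁ : (1 : ℂ) - 2 * c₁ + 1 = 4 * (s₁ : ℂ) ^ 2 := by rw [← e₁]; ring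
    have r₂ : (1 : ℂ) - 2 * c₂ + 1 = 4 * (s₂ : ℂ) ^ 2 := by rw [← e₂]; ring
    simp only [one_pow, Finset.sum_const, Finset.card_range, nsmul_eq_mul, mul_one, r₁, r₂]
    exact mul_ne_zero (mul_ne_zero (mul_ne_zero hpc hqc)
        (mul_ne_zero (by norm_num : (4:ℂ) ≠ 0) (pow_ne_zero _ hs₁c)))
        (mul_ne_zero (by norm_num : (4:ℂ) ≠ 0) (pow_ne_zero _ hs₂c))
  have hcont : ContinuousAt G 1 := by
    apply ContinuousAt.div
    · fun_prop
    · fun_prop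
    · exact hden1
  have hGtendsto : Tendsto G (nhds 1) (nhds L) := hG1 ▸ hcont.tendsto
  have hkey : Tendsto G (nhdsWithin 1 {t : ℂ | t ≠ 1 ∧
        (t ^ p - 1) * (t ^ q - 1) *
          (t ^ (2 * q) - 2 * c₁ * t ^ q + 1) *
          (t ^ (2 * p) - 2 * c₂ * t ^ p + 1) ≠ 0}) (nhds L) :=
    tendsto_nhdsWithin_of_tendsto_nhds hGtendsto
  have heq : (fun t : ℂ => f t / (t - 1)) =ᶠ[nhdsWithin 1 {t : ℂ | t ≠ 1 ∧
        (t ^ p - 1) * (t ^ q - 1) *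
          (t ^ (2 * q) - 2 * c₁ * t ^ q + 1) *
          (t ^ (2 * p) - 2 * c₂ * t ^ p + 1) ≠ 0}] G := by
    apply Filter.eventuallyEq_of_mem self_mem_nhdsWithin
    rintro t ⟨ht1, hD⟩
    have ht : t - 1 ≠ 0 := sub_ne_zero.mpr ht1
    have hA : t ^ (p * q) - 1 = (∑ i ∈ Finset.range (p * q), t ^ i) * (t - 1) :=
      (geom_sum_mul t (p * q)).symm
    have hB : t ^ p - 1 = (∑ i ∈ Finset.range p, t ^ i) * (t - 1) :=
      (geom_sum_mul t p).symm
    have hC : t ^ q - 1 = (∑ i ∈ Finset.range q, t ^ i) * (t - 1) :=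
      (geom_sum_mul t q).symm
    rw [hB, hC] at hD
    have hB0 : (∑ i ∈ Finset.range p, t ^ i) ≠ 0 := fun h => hD (by rw [h]; ring)
    have hC0 : (∑ i ∈ Finset.range q, t ^ i) ≠ 0 := fun h => hD (by rw [h]; ring)
    have hD1 : (t ^ (2 * q) - 2 * c₁ * t ^ q + 1) ≠ 0 := fun h => hD (by rw [h]; ring)
    have hD2 : (t ^ (2 * p) - 2 * c₂ * t ^ p + 1) ≠ 0 := fun h => hD (by rw [h]; ring)
    show f t / (t - 1) = G t
    rw [hf t, hGdef, hA, hB, hC]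
    field_simp
  refine ⟨(Filter.tendsto_congr' heq).mpr hkey, ?_⟩
  exact ((Filter.tendsto_congr' heq).mpr hkey).neg
end

section
/- Let s, u ∈ ℂ with s ≠ 0, let v ∈ ℂ satisfy v² = s, and put ρ(a) = [[v, 1/v],[0, 1/v]], ρ(b) = [[v, 0],[−v·u, 1/v]], ρ(w) = ρ(b)·ρ(a)⁻¹·ρ(b)⁻¹·ρ(a). Let ξ₊, ξ₋ ∈ ℂ satisfy ξ₊·ξ₋ = 1 and ξ₊ + ξ₋ = 2 + 2u − u/s − s·u + u². Let Q = [[u+1−1/s, u+1−1/s],[1−s·u−ξ₊, 1−s·u−ξ₋]]. Then ρ(w)·Q = Q·diag(ξ₊, ξ₋); in particular, if Q is invertible then Q⁻¹·ρ(w)·Q = diag(ξ₊, ξ₋). -/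
open Matrix

/-!
The matrix `ρ(w)` is computed explicitly; it has determinant `1` and trace `γ`, so `ξ₊, ξ₋` are
its eigenvalues. For a `2 × 2` matrix `[[a, b], [c, d]]` and a root `ξ` of its characteristic
polynomial, `(-b, a - ξ)` is an eigenvector for `ξ`, and these are the columns of `Q`.
-/

theorem Matrix.fin_two_mul_eigenvectors_eq {R : Type*} [CommRing R] (a b c d ξp ξm : R)
    (hsum : ξp + ξm = a + d) (hprod : ξp * ξm = a * d - b * c) :
    !![a, b; c, d] * !![-b, -b; a - ξp, a - ξm] =
      !![-b, -b; a - ξp, a - ξm] * diagonal ![ξp, ξm] := by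
  have hp : ξp ^ 2 = (a + d) * ξp - (a * d - b * c) := by
    linear_combination ξp * hsum - hprod
  have hm : ξm ^ 2 = (a + d) * ξm - (a * d - b * c) := by
    linear_combination ξm * hsum - hprod
  ext i j
  fin_cases i <;> fin_cases j <;> simp [mul_apply, Fin.sum_univ_two, diagonal]
  · ring
  · ring
  · linear_combination hp
  · linear_combination hm

theorem twistKnot_rho_a_inv {v : ℂ} (hv : v ≠ 0) :
    (!![v, 1 / v; 0, 1 / v])⁻¹ = !![1 / v, -(1 / v); 0, v] := by
  refine inv_eq_left_inv ?_
  ext i j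
  fin_cases i <;> fin_cases j <;> simp [mul_apply, Fin.sum_univ_two] <;> field_simp

theorem twistKnot_rho_b_inv {v : ℂ} (u : ℂ) (hv : v ≠ 0) :
    (!![v, 0; -v * u, 1 / v])⁻¹ = !![1 / v, 0; v * u, v] := by
  refine inv_eq_left_inv ?_
  ext i j
  fin_cases i <;> fin_cases j <;> simp [mul_apply, Fin.sum_univ_two, hv]
  ring

theorem twistKnot_rho_w_eq {v : ℂ} (u : ℂ) (hv : v ≠ 0) :
    !![v, 0; -v * u, 1 / v] * (!![v, 1 / v; 0, 1 / v])⁻¹ * (!![v, 0; -v * u, 1 / v])⁻¹ *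
        !![v, 1 / v; 0, 1 / v] =
      !![1 - v ^ 2 * u, -(u + 1 - 1 / v ^ 2); (u + 1) * u * v ^ 2 - u, (u + 1) ^ 2 - u / v ^ 2] := by
  rw [twistKnot_rho_a_inv hv, twistKnot_rho_b_inv u hv]
  ext i j
  fin_cases i <;> fin_cases j <;> simp [mul_apply, Fin.sum_univ_two] <;> field_simp <;> ring

/-- The matrix `Q` diagonalizes `ρ(w)`: `ρ(w)Q = Q·diag(ξ₊, ξ₋)`, and if `Q`
is invertible then `Q⁻¹ρ(w)Q = diag(ξ₊, ξ₋)`. -/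
theorem twist_knot_diagonalize_w
    (s u v ξp ξm : ℂ) (hs : s ≠ 0) (hv : v ^ 2 = s)
    (hprod : ξp * ξm = 1)
    (hsum : ξp + ξm = 2 + 2 * u - u / s - s * u + u ^ 2)
    (ρa ρb ρw Q : Matrix (Fin 2) (Fin 2) ℂ)
    (hρa : ρa = !![v, 1 / v; 0, 1 / v])
    (hρb : ρb = !![v, 0; -v * u, 1 / v])
    (hρw : ρw = ρb * ρa⁻¹ * ρb⁻¹ * ρa)
    (hQ : Q = !![u + 1 - 1 / s, u + 1 - 1 / s;
                 1 - s * u - ξp, 1 - s * u - ξm]) :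
    ρw * Q = Q * Matrix.diagonal ![ξp, ξm] ∧
    (IsUnit Q.det → Q⁻¹ * ρw * Q = Matrix.diagonal ![ξp, ξm]) := by
  subst hv hρa hρb hρw hQ
  have hv0 : v ≠ 0 := by rintro rfl; simp at hs
  have hdiag := Matrix.fin_two_mul_eigenvectors_eq (1 - v ^ 2 * u) (-(u + 1 - 1 / v ^ 2))
    ((u + 1) * u * v ^ 2 - u) ((u + 1) ^ 2 - u / v ^ 2) ξp ξm
    (by rw [hsum]; ring) (by rw [hprod]; field_simp; ring)
  rw [neg_neg] at hdiag
  rw [twistKnot_rho_w_eq u hv0]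
  refine ⟨hdiag, fun hdet => ?_⟩
  rw [mul_assoc, hdiag, ← mul_assoc, nonsing_inv_mul _ hdet, one_mul]
end

section
/- Let s, u ∈ ℂ with s ≠ 0. Define the 3×3 matrices A = [[s, −2, −1/s],[0, 1, 1/s],[0, 0, 1/s]], B = [[s, 0, 0],[s·u, 1, 0],[−s·u², −2u, 1/s]], and W = B·A⁻¹·B⁻¹·A. Let ξ₊, ξ₋ ∈ ℂ with ξ₊·ξ₋ = 1, ξ₊ ≠ ξ₋, and ξ₊ + ξ₋ = 2 + 2u − u/s − s·u + u². Set α = 1 − s·u − ξ₊, β = 1 − s·u − ξ₋, δ = u + 1 − 1/s, assume δ ≠ 0, and let P = (1/(α−β))·[[−δ, 2δ, δ],[α, −(α+β), −β],[α²/δ, −2αβ/δ, −β²/δ]]. Then W·P = P·diag(ξ₊², 1, ξ₋²); in particular, if P is invertible then P⁻¹·W·P = diag(ξ₊², 1, ξ₋²). -/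
open Matrix

set_option maxHeartbeats 1600000 in
/-- The matrix `P = Ad_Q` diagonalizes `W = Ad_{ρ(w)} = BA⁻¹B⁻¹A`:
`WP = P·diag(ξ₊², 1, ξ₋²)`, and if `P` is invertible then
`P⁻¹WP = diag(ξ₊², 1, ξ₋²)`. -/
theorem twist_knot_diagonalize_adjoint_w
    (s u ξp ξm : ℂ) (hs : s ≠ 0)
    (hprod : ξp * ξm = 1) (hne : ξp ≠ ξm)
    (hsum : ξp + ξm = 2 + 2 * u - u / s - s * u + u ^ 2)
    (α β δ : ℂ)
    (hα : α = 1 - s * u - ξp) (hβ : β = 1 - s * u - ξm)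
    (hδ : δ = u + 1 - 1 / s) (hδ0 : δ ≠ 0)
    (A B W P : Matrix (Fin 3) (Fin 3) ℂ)
    (hA : A = !![s, -2, -(1 / s); 0, 1, 1 / s; 0, 0, 1 / s])
    (hB : B = !![s, 0, 0; s * u, 1, 0; -(s * u ^ 2), -(2 * u), 1 / s])
    (hW : W = B * A⁻¹ * B⁻¹ * A)
    (hP : P = (1 / (α - β)) •
      !![-δ, 2 * δ, δ;
         α, -(α + β), -β;
         α ^ 2 / δ, -(2 * α * β) / δ, -(β ^ 2) / δ]) :
    W * P = P * Matrix.diagonal ![ξp ^ 2, 1, ξm ^ 2] ∧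
    (IsUnit P.det → P⁻¹ * W * P = Matrix.diagonal ![ξp ^ 2, 1, ξm ^ 2]) := by
  subst hα hβ hδ
  have hs1 : s * s⁻¹ = 1 := mul_inv_cancel₀ hs
  have hAi : A⁻¹ = !![1/s, 2/s, -(1/s); 0, 1, -1; 0, 0, s] := by
    rw [hA]
    apply Matrix.inv_eq_right_inv
    ext i j
    fin_cases i <;> fin_cases j <;>
      simp [Matrix.mul_apply, Fin.sum_univ_succ] <;> (try field_simp) <;> (try ring)
  have hBi : B⁻¹ = !![1/s, 0, 0; -u, 1, 0; -(s*u^2), 2*s*u, s] := by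
    rw [hB]
    apply Matrix.inv_eq_right_inv
    ext i j
    fin_cases i <;> fin_cases j <;>
      simp [Matrix.mul_apply, Fin.sum_univ_succ] <;> (try field_simp) <;> (try ring)
  have hM1 : B * A⁻¹ = !![1, 2, -1; u, 1 + 2*u, -1 - u; -u^2, -2*u - 2*u^2, 1 + 2*u + u^2] := by
    rw [hB, hAi, Matrix.mul_fin_three]
    ext i j
    fin_cases i <;> fin_cases j <;> simp <;> (try field_simp) <;> (try ring)
  have hM2 : B * A⁻¹ * B⁻¹ = !![(1 - 2*s*u + s^2*u^2) / s, 2 - 2*s*u, -s;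
      (u - s*u - 2*s*u^2 + s^2*u^2 + s^2*u^3) / s, 1 + 2*u - 2*s*u - 2*s*u^2, -s - s*u;
      (-u^2 + 2*s*u^2 + 2*s*u^3 - s^2*u^2 - 2*s^2*u^3 - s^2*u^4) / s, -2*u - 2*u^2 + 2*s*u + 4*s*u^2 + 2*s*u^3, s + 2*s*u + s*u^2] := by
    rw [hM1, hBi, Matrix.mul_fin_three]
    ext i j
    fin_cases i <;> fin_cases j <;> simp <;> (try field_simp) <;> (try ring)
  have hWex : W = !![1 - 2*s*u + s^2*u^2, (-2 + 2*s + 4*s*u - 2*s^2*u - 2*s^2*u^2) / s, (-1 + 2*s + 2*s*u - s^2 - 2*s^2*u - s^2*u^2) / s^2;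
       u - s*u - 2*s*u^2 + s^2*u^2 + s^2*u^3, (-2*u + s + 4*s*u + 4*s*u^2 - 2*s^2*u - 4*s^2*u^2 - 2*s^2*u^3) / s, (-u + s + 3*s*u + 2*s*u^2 - s^2 - 3*s^2*u - 3*s^2*u^2 - s^2*u^3) / s^2;
       -u^2 + 2*s*u^2 + 2*s*u^3 - s^2*u^2 - 2*s^2*u^3 - s^2*u^4, (2*u^2 - 2*s*u - 6*s*u^2 - 4*s*u^3 + 2*s^2*u + 6*s^2*u^2 + 6*s^2*u^3 + 2*s^2*u^4) / s, (u^2 - 2*s*u - 4*s*u^2 - 2*s*u^3 + s^2 + 4*s^2*u + 6*s^2*u^2 + 4*s^2*u^3 + s^2*u^4) / s^2] := by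
    rw [hW, hM2, hA, Matrix.mul_fin_three]
    ext i j
    fin_cases i <;> fin_cases j <;> simp <;> (try field_simp) <;> (try ring)
  have key2 : W * !![-(u + 1 - 1/s)^2, 2*(u + 1 - 1/s)^2, (u + 1 - 1/s)^2;
       (u + 1 - 1/s)*(1 - s*u - ξp), -((u + 1 - 1/s)*((1 - s*u - ξp) + (1 - s*u - ξm))), -((u + 1 - 1/s)*(1 - s*u - ξm));
       (1 - s*u - ξp)^2, -(2*(1 - s*u - ξp)*(1 - s*u - ξm)), -((1 - s*u - ξm)^2)]
      = !![-(u + 1 - 1/s)^2, 2*(u + 1 - 1/s)^2, (u + 1 - 1/s)^2;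
       (u + 1 - 1/s)*(1 - s*u - ξp), -((u + 1 - 1/s)*((1 - s*u - ξp) + (1 - s*u - ξm))), -((u + 1 - 1/s)*(1 - s*u - ξm));
       (1 - s*u - ξp)^2, -(2*(1 - s*u - ξp)*(1 - s*u - ξm)), -((1 - s*u - ξm)^2)]
        * Matrix.diagonal ![ξp ^ 2, 1, ξm ^ 2] := by
    rw [hWex]
    ext i j
    fin_cases i <;> fin_cases j <;>
      simp [Matrix.mul_apply, Fin.sum_univ_succ, Matrix.diagonal]
    · linear_combination (norm := ring1) (-1 + 2*s⁻¹ - 2*u + 2*u*s⁻¹ - u^2 - 2*s*s⁻¹^2 - 2*s*u*s⁻¹^2 + s^2*s⁻¹^2 + 2*s^2*u*s⁻¹^2 + s^2*u^2*s⁻¹^2) * hprod + (ξp - 2*ξp*s⁻¹ + 2*u*ξp - 2*u*ξp*s⁻¹ + u^2*ξp + 2*s*ξp*s⁻¹^2 + 2*s*u*ξp*s⁻¹^2 - s^2*ξp*s⁻¹^2 - 2*s^2*u*ξp*s⁻¹^2 - s^2*u^2*ξp*s⁻¹^2) * hsum + (2 - 2*s⁻¹ - 2*ξp + 2*ξp*s⁻¹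 + 4*u - 2*u*s⁻¹ - 6*u*ξp + 7*u*ξp*s⁻¹ - 2*u*ξp*s⁻¹^2 + 2*u^2 - 7*u^2*ξp + 8*u^2*ξp*s⁻¹ - 2*u^2*ξp*s⁻¹^2 - 4*u^3*ξp + 3*u^3*ξp*s⁻¹ - u^4*ξp - 2*s*u + s*u*ξp - 2*s*u*ξp*s⁻¹ + s*u*ξp*s⁻¹^2 - 4*s*u^2 + 2*s*u^2*ξp - 5*s*u^2*ξp*s⁻¹ + 2*s*u^2*ξp*s⁻¹^2 - 2*s*u^3 + s*u^3*ξp - 4*s*u^3*ξp*s⁻¹ + s*u^3*ξp*s⁻¹^2 - s*u^4*ξp*s⁻¹ + 2*s^2*u*s⁻¹ - s^2*u*ξp*s⁻¹ + s^2*u^2 + 4*s^2*u^2*s⁻¹ - 2*s^2*u^2*ξp*s⁻¹ + 2*s^2*u^3 + 2*s^2*u^3*s⁻¹ - s^2*u^3*ξp*s⁻¹ + s^2*u^4 - s^3*u^2*s⁻¹ - 2*s^3*u^3*s⁻¹ - s^3*u^4*s⁻¹) * hs1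
    · linear_combination (norm := ring1) (2*s⁻¹^2 - 4*s*s⁻¹^2 - 4*s*u*s⁻¹^2 + 2*s^2*s⁻¹^2 + 4*s^2*u*s⁻¹^2 + 2*s^2*u^2*s⁻¹^2) * hprod + (-2*s⁻¹ - 2*u*s⁻¹ + 2*s*s⁻¹ + 2*s*s⁻¹^2 + 6*s*u*s⁻¹ + 2*s*u*s⁻¹^2 + 4*s*u^2*s⁻¹ - 2*s^2*s⁻¹^2 - 2*s^2*u*s⁻¹ - 6*s^2*u*s⁻¹^2 - 4*s^2*u^2*s⁻¹ - 4*s^2*u^2*s⁻¹^2 - 2*s^2*u^3*s⁻¹ + 2*s^3*u*s⁻¹^2 + 4*s^3*u^2*s⁻¹^2 + 2*s^3*u^3*s⁻¹^2) * hsum + (4*u*s⁻¹ - 2*u*s⁻¹^2 + 6*u^2*s⁻¹ - 2*u^2*s⁻¹^2 + 2*u^3*s⁻¹ + 4*s*u - 10*s*u*s⁻¹ + 2*s*u*s⁻¹^2 + 8*s*u^2 - 20*s*u^2*s⁻¹ + 6*s*u^2*s⁻¹^2 + 4*s*u^3 - 14*s*u^3*s⁻¹ + 4*s*u^3*s⁻¹^2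 - 4*s*u^4*s⁻¹ + 2*s^2*u*s⁻¹ - 2*s^2*u^2 + 10*s^2*u^2*s⁻¹ - 2*s^2*u^2*s⁻¹^2 - 4*s^2*u^3 + 14*s^2*u^3*s⁻¹ - 4*s^2*u^3*s⁻¹^2 - 2*s^2*u^4 + 8*s^2*u^4*s⁻¹ - 2*s^2*u^4*s⁻¹^2 + 2*s^2*u^5*s⁻¹) * hs1
    · linear_combination (norm := ring1) (1 - 2*s⁻¹ + 2*u - 2*u*s⁻¹ + u^2 + 2*s*s⁻¹^2 + 2*s*u*s⁻¹^2 - s^2*s⁻¹^2 - 2*s^2*u*s⁻¹^2 - s^2*u^2*s⁻¹^2) * hprod + (-2 + 2*s⁻¹ - ξm + 2*ξm*s⁻¹ - 6*u + 7*u*s⁻¹ - 2*u*s⁻¹^2 - 2*u*ξm + 2*u*ξm*s⁻¹ - 7*u^2 + 8*u^2*s⁻¹ - 2*u^2*s⁻¹^2 - u^2*ξm - 4*u^3 + 3*u^3*s⁻¹ - u^4 + 2*s*s⁻¹ - 2*s*s⁻¹^2 - 2*s*ξm*s⁻¹^2 + s*u + 4*s*u*s⁻¹ - 6*s*u*s⁻¹^2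 + 2*s*u*s⁻¹^3 - 2*s*u*ξm*s⁻¹^2 + 2*s*u^2 + 2*s*u^2*s⁻¹ - 6*s*u^2*s⁻¹^2 + 2*s*u^2*s⁻¹^3 + s*u^3 - 2*s*u^3*s⁻¹^2 + s^2*ξm*s⁻¹^2 - 2*s^2*u*s⁻¹ + 2*s^2*u*s⁻¹^2 - s^2*u*s⁻¹^3 + 2*s^2*u*ξm*s⁻¹^2 - 4*s^2*u^2*s⁻¹ + 5*s^2*u^2*s⁻¹^2 - 2*s^2*u^2*s⁻¹^3 + s^2*u^2*ξm*s⁻¹^2 - 2*s^2*u^3*s⁻¹ + 4*s^2*u^3*s⁻¹^2 - s^2*u^3*s⁻¹^3 + s^2*u^4*s⁻¹^2 + s^3*u*s⁻¹^2 + 2*s^3*u^2*s⁻¹^2 + s^3*u^3*s⁻¹^2) * hsum + (2 - 2*s⁻¹ - 2*ξp + 2*ξp*s⁻¹ + 12*u - 18*u*s⁻¹ + 6*u*s⁻¹^2 - 6*u*ξp + 7*u*ξp*s⁻¹ - 2*u*ξp*s⁻¹^2 + 26*u^2 - 38*u^2*s⁻¹ + 15*u^2*s⁻¹^2 - 2*u^2*s⁻¹^3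 - 7*u^2*ξp + 8*u^2*ξp*s⁻¹ - 2*u^2*ξp*s⁻¹^2 + 28*u^3 - 36*u^3*s⁻¹ + 14*u^3*s⁻¹^2 - 2*u^3*s⁻¹^3 - 4*u^3*ξp + 3*u^3*ξp*s⁻¹ + 17*u^4 - 18*u^4*s⁻¹ + 5*u^4*s⁻¹^2 - u^4*ξp + 6*u^5 - 4*u^5*s⁻¹ + u^6 - 2*s*u + 6*s*u*s⁻¹ - 2*s*u*s⁻¹^2 + s*u*ξp - 2*s*u*ξp*s⁻¹ + s*u*ξp*s⁻¹^2 - 8*s*u^2 + 22*s*u^2*s⁻¹ - 10*s*u^2*s⁻¹^2 + s*u^2*s⁻¹^3 + 2*s*u^2*ξp - 5*s*u^2*ξp*s⁻¹ + 2*s*u^2*ξp*s⁻¹^2 - 12*s*u^3 + 30*s*u^3*s⁻¹ - 14*s*u^3*s⁻¹^2 + 2*s*u^3*s⁻¹^3 + s*u^3*ξp - 4*s*u^3*ξp*s⁻¹ + s*u^3*ξp*s⁻¹^2 - 8*s*u^4 + 19*s*u^4*s⁻¹ - 8*s*u^4*s⁻¹^2 + s*u^4*s⁻¹^3 - s*u^4*ξp*s⁻¹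 - 2*s*u^5 + 6*s*u^5*s⁻¹ - 2*s*u^5*s⁻¹^2 + s*u^6*s⁻¹ - s^2*u*ξp*s⁻¹ - 2*s^2*u^2*ξp*s⁻¹ - s^2*u^3*ξp*s⁻¹) * hs1
    · linear_combination (norm := ring1) (-1 + s⁻¹ - ξp + ξp*s⁻¹ - 3*u + 3*u*s⁻¹ - u*ξp - 3*u^2 + 2*u^2*s⁻¹ - u^3 - s*s⁻¹^2 - 3*s*u*s⁻¹^2 - 2*s*u^2*s⁻¹^2 + s^2*s⁻¹^2 + 3*s^2*u*s⁻¹^2 + 3*s^2*u^2*s⁻¹^2 + s^2*u^3*s⁻¹^2) * hprod + (ξp - ξp*s⁻¹ + ξp^2 - ξp^2*s⁻¹ + 3*u*ξp - 3*u*ξp*s⁻¹ + u*ξp^2 + 3*u^2*ξp - 2*u^2*ξp*s⁻¹ + u^3*ξp + s*ξp*s⁻¹^2 + 3*s*u*ξp*s⁻¹^2 + 2*s*u^2*ξp*s⁻¹^2 - s^2*ξp*s⁻¹^2 - 3*s^2*u*ξp*s⁻¹^2 - 3*s^2*u^2*ξp*s⁻¹^2 - s^2*u^3*ξp*s⁻¹^2)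 * hsum + (1 - s⁻¹ - ξp + ξp*s⁻¹ + 4*u - 3*u*s⁻¹ - 7*u*ξp + 7*u*ξp*s⁻¹ - u*ξp*s⁻¹^2 + 5*u^2 - 2*u^2*s⁻¹ - 13*u^2*ξp + 12*u^2*ξp*s⁻¹ - 3*u^2*ξp*s⁻¹^2 + 2*u^3 - 11*u^3*ξp + 10*u^3*ξp*s⁻¹ - 2*u^3*ξp*s⁻¹^2 - 5*u^4*ξp + 3*u^4*ξp*s⁻¹ - u^5*ξp - s*u + s*u*s⁻¹ + s*u*ξp - 3*s*u*ξp*s⁻¹ + s*u*ξp*s⁻¹^2 - 4*s*u^2 + s*u^2*s⁻¹ + 3*s*u^2*ξp - 8*s*u^2*ξp*s⁻¹ + 3*s*u^2*ξp*s⁻¹^2 - 5*s*u^3 + 3*s*u^3*ξp - 9*s*u^3*ξp*s⁻¹ + 3*s*u^3*ξp*s⁻¹^2 - 2*s*u^4 + s*u^4*ξp - 5*s*u^4*ξp*s⁻¹ + s*u^4*ξp*s⁻¹^2 - s*u^5*ξp*s⁻¹ + 2*s^2*u*s⁻¹ - s^2*u*ξp*s⁻¹ + s^2*u^2 + 5*s^2*u^2*s⁻¹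 - 3*s^2*u^2*ξp*s⁻¹ + 3*s^2*u^3 + 5*s^2*u^3*s⁻¹ - 3*s^2*u^3*ξp*s⁻¹ + 3*s^2*u^4 + 2*s^2*u^4*s⁻¹ - s^2*u^4*ξp*s⁻¹ + s^2*u^5 - s^3*u^2*s⁻¹ - 3*s^3*u^3*s⁻¹ - 3*s^3*u^4*s⁻¹ - s^3*u^5*s⁻¹) * hs1
    · linear_combination (norm := ring1) (2*u*s⁻¹^2 - 2*s*s⁻¹^2 - 6*s*u*s⁻¹^2 - 4*s*u^2*s⁻¹^2 + 2*s^2*s⁻¹^2 + 6*s^2*u*s⁻¹^2 + 6*s^2*u^2*s⁻¹^2 + 2*s^2*u^3*s⁻¹^2) * hprod + (-1 + s⁻¹ - u - 2*u*s⁻¹ - 2*u^2*s⁻¹ + s*s⁻¹ + s*s⁻¹^2 + 5*s*u*s⁻¹ + 2*s*u*s⁻¹^2 + 8*s*u^2*s⁻¹ + 2*s*u^2*s⁻¹^2 + 4*s*u^3*s⁻¹ - 2*s^2*s⁻¹^2 - 2*s^2*u*s⁻¹ - 6*s^2*u*s⁻¹^2 - 6*s^2*u^2*s⁻¹ - 8*s^2*u^2*s⁻¹^2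 - 6*s^2*u^3*s⁻¹ - 4*s^2*u^3*s⁻¹^2 - 2*s^2*u^4*s⁻¹ + 2*s^3*u*s⁻¹^2 + 6*s^3*u^2*s⁻¹^2 + 6*s^3*u^3*s⁻¹^2 + 2*s^3*u^4*s⁻¹^2) * hsum + (u*s⁻¹ - u*s⁻¹^2 - u^2 + 6*u^2*s⁻¹ - 2*u^2*s⁻¹^2 - u^3 + 6*u^3*s⁻¹ - 2*u^3*s⁻¹^2 + 2*u^4*s⁻¹ + 3*s*u - 7*s*u*s⁻¹ + 2*s*u*s⁻¹^2 + 9*s*u^2 - 22*s*u^2*s⁻¹ + 6*s*u^2*s⁻¹^2 + 10*s*u^3 - 28*s*u^3*s⁻¹ + 8*s*u^3*s⁻¹^2 + 4*s*u^4 - 16*s*u^4*s⁻¹ + 4*s*u^4*s⁻¹^2 - 4*s*u^5*s⁻¹ + 2*s^2*u*s⁻¹ - 2*s^2*u^2 + 12*s^2*u^2*s⁻¹ - 2*s^2*u^2*s⁻¹^2 - 6*s^2*u^3 + 24*s^2*u^3*s⁻¹ - 6*s^2*u^3*s⁻¹^2 - 6*s^2*u^4 + 22*s^2*u^4*s⁻¹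 - 6*s^2*u^4*s⁻¹^2 - 2*s^2*u^5 + 10*s^2*u^5*s⁻¹ - 2*s^2*u^5*s⁻¹^2 + 2*s^2*u^6*s⁻¹) * hs1
    · linear_combination (norm := ring1) (3 - 3*s⁻¹ - ξp + ξp*s⁻¹ + 7*u - 6*u*s⁻¹ + u*s⁻¹^2 - u*ξp + 6*u^2 - 4*u^2*s⁻¹ + 2*u^3 + s*s⁻¹^2 - s*u + s*u*s⁻¹ + 3*s*u*s⁻¹^2 - s*u^2 + 2*s*u^2*s⁻¹^2 - s^2*s⁻¹^2 - 3*s^2*u*s⁻¹^2 - 3*s^2*u^2*s⁻¹^2 - s^2*u^3*s⁻¹^2) * hprod + (-2 + 2*s⁻¹ - ξm + ξm*s⁻¹ - ξm^2 + ξm^2*s⁻¹ + ξp*ξm - ξp*ξm*s⁻¹ - 8*u + 7*u*s⁻¹ - u*s⁻¹^2 - 3*u*ξm + 3*u*ξm*s⁻¹ - u*ξm^2 + u*ξp*ξm - 13*u^2 + 12*u^2*s⁻¹ - 3*u^2*s⁻¹^2 - 3*u^2*ξm + 2*u^2*ξm*s⁻¹ - 11*u^3 + 10*u^3*s⁻¹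 - 2*u^3*s⁻¹^2 - u^3*ξm - 5*u^4 + 3*u^4*s⁻¹ - u^5 + s*s⁻¹ - s*s⁻¹^2 - s*ξm*s⁻¹^2 + s*u + 4*s*u*s⁻¹ - 6*s*u*s⁻¹^2 + s*u*s⁻¹^3 - 3*s*u*ξm*s⁻¹^2 + 3*s*u^2 + 5*s*u^2*s⁻¹ - 9*s*u^2*s⁻¹^2 + 3*s*u^2*s⁻¹^3 - 2*s*u^2*ξm*s⁻¹^2 + 3*s*u^3 + 2*s*u^3*s⁻¹ - 7*s*u^3*s⁻¹^2 + 2*s*u^3*s⁻¹^3 + s*u^4 - 2*s*u^4*s⁻¹^2 + s^2*ξm*s⁻¹^2 - 2*s^2*u*s⁻¹ + 3*s^2*u*s⁻¹^2 - s^2*u*s⁻¹^3 + 3*s^2*u*ξm*s⁻¹^2 - 6*s^2*u^2*s⁻¹ + 8*s^2*u^2*s⁻¹^2 - 3*s^2*u^2*s⁻¹^3 + 3*s^2*u^2*ξm*s⁻¹^2 - 6*s^2*u^3*s⁻¹ + 9*s^2*u^3*s⁻¹^2 - 3*s^2*u^3*s⁻¹^3 + s^2*u^3*ξm*s⁻¹^2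 - 2*s^2*u^4*s⁻¹ + 5*s^2*u^4*s⁻¹^2 - s^2*u^4*s⁻¹^3 + s^2*u^5*s⁻¹^2 + s^3*u*s⁻¹^2 + 3*s^3*u^2*s⁻¹^2 + 3*s^3*u^3*s⁻¹^2 + s^3*u^4*s⁻¹^2) * hsum + (1 - s⁻¹ - ξp + ξp*s⁻¹ + 12*u - 14*u*s⁻¹ + 3*u*s⁻¹^2 - 7*u*ξp + 7*u*ξp*s⁻¹ - u*ξp*s⁻¹^2 + 36*u^2 - 44*u^2*s⁻¹ + 15*u^2*s⁻¹^2 - u^2*s⁻¹^3 - 13*u^2*ξp + 12*u^2*ξp*s⁻¹ - 3*u^2*ξp*s⁻¹^2 + 53*u^3 - 64*u^3*s⁻¹ + 23*u^3*s⁻¹^2 - 3*u^3*s⁻¹^3 - 11*u^3*ξp + 10*u^3*ξp*s⁻¹ - 2*u^3*ξp*s⁻¹^2 + 45*u^4 - 49*u^4*s⁻¹ + 17*u^4*s⁻¹^2 - 2*u^4*s⁻¹^3 - 5*u^4*ξp + 3*u^4*ξp*s⁻¹ + 23*u^5 - 21*u^5*s⁻¹ + 5*u^5*s⁻¹^2 -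 u^5*ξp + 7*u^6 - 4*u^6*s⁻¹ + u^7 - 2*s*u + 6*s*u*s⁻¹ - 2*s*u*s⁻¹^2 + s*u*ξp - 3*s*u*ξp*s⁻¹ + s*u*ξp*s⁻¹^2 - 11*s*u^2 + 29*s*u^2*s⁻¹ - 12*s*u^2*s⁻¹^2 + s*u^2*s⁻¹^3 + 3*s*u^2*ξp - 8*s*u^2*ξp*s⁻¹ + 3*s*u^2*ξp*s⁻¹^2 - 21*s*u^3 + 52*s*u^3*s⁻¹ - 24*s*u^3*s⁻¹^2 + 3*s*u^3*s⁻¹^3 + 3*s*u^3*ξp - 9*s*u^3*ξp*s⁻¹ + 3*s*u^3*ξp*s⁻¹^2 - 20*s*u^4 + 49*s*u^4*s⁻¹ - 22*s*u^4*s⁻¹^2 + 3*s*u^4*s⁻¹^3 + s*u^4*ξp - 5*s*u^4*ξp*s⁻¹ + s*u^4*ξp*s⁻¹^2 - 10*s*u^5 + 25*s*u^5*s⁻¹ - 10*s*u^5*s⁻¹^2 + s*u^5*s⁻¹^3 - s*u^5*ξp*s⁻¹ - 2*s*u^6 + 7*s*u^6*s⁻¹ - 2*s*u^6*s⁻¹^2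 + s*u^7*s⁻¹ - s^2*u*ξp*s⁻¹ - 3*s^2*u^2*ξp*s⁻¹ - 3*s^2*u^3*ξp*s⁻¹ - s^2*u^4*ξp*s⁻¹) * hs1
    · linear_combination (norm := ring1) (ξp^2 + 4*u - 2*u*s⁻¹ + 2*u*ξp - u*ξp*s⁻¹ + 6*u^2 - 4*u^2*s⁻¹ + u^2*ξp + 4*u^3 - 2*u^3*s⁻¹ + u^4 + 2*s*u*s⁻¹^2 + s*u*ξp + 4*s*u^2*s⁻¹^2 + 2*s*u^3*s⁻¹^2 - s^2*s⁻¹^2 - 4*s^2*u*s⁻¹^2 - 6*s^2*u^2*s⁻¹^2 - 4*s^2*u^3*s⁻¹^2 - s^2*u^4*s⁻¹^2) * hprod + (-ξp^3 - 4*u*ξp + 2*u*ξp*s⁻¹ - 2*u*ξp^2 + u*ξp^2*s⁻¹ - 6*u^2*ξp + 4*u^2*ξp*s⁻¹ - u^2*ξp^2 - 4*u^3*ξp + 2*u^3*ξp*s⁻¹ - u^4*ξp - 2*s*u*ξp*s⁻¹^2 - s*u*ξp^2 - 4*s*u^2*ξp*s⁻¹^2 - 2*s*u^3*ξp*s⁻¹^2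 + s^2*ξp*s⁻¹^2 + 4*s^2*u*ξp*s⁻¹^2 + 6*s^2*u^2*ξp*s⁻¹^2 + 4*s^2*u^3*ξp*s⁻¹^2 + s^2*u^4*ξp*s⁻¹^2) * hsum + (-4*u + 2*u*s⁻¹ + 6*u*ξp - 3*u*ξp*s⁻¹ - 7*u^2 + 4*u^2*s⁻¹ + 19*u^2*ξp - 14*u^2*ξp*s⁻¹ + 2*u^2*ξp*s⁻¹^2 - 6*u^3 + 2*u^3*s⁻¹ + 24*u^3*ξp - 18*u^3*ξp*s⁻¹ + 4*u^3*ξp*s⁻¹^2 - 2*u^4 + 16*u^4*ξp - 12*u^4*ξp*s⁻¹ + 2*u^4*ξp*s⁻¹^2 + 6*u^5*ξp - 3*u^5*ξp*s⁻¹ + u^6*ξp - 2*s*u*s⁻¹ - s*u*ξp + 4*s*u*ξp*s⁻¹ - s*u*ξp*s⁻¹^2 + 2*s*u^2 - 3*s*u^2*s⁻¹ - 4*s*u^2*ξp + 13*s*u^2*ξp*s⁻¹ - 4*s*u^2*ξp*s⁻¹^2 + 6*s*u^3 - 2*s*u^3*s⁻¹ - 6*s*u^3*ξp + 18*s*u^3*ξp*s⁻¹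 - 6*s*u^3*ξp*s⁻¹^2 + 6*s*u^4 - 4*s*u^4*ξp + 14*s*u^4*ξp*s⁻¹ - 4*s*u^4*ξp*s⁻¹^2 + 2*s*u^5 - s*u^5*ξp + 6*s*u^5*ξp*s⁻¹ - s*u^5*ξp*s⁻¹^2 + s*u^6*ξp*s⁻¹ - 2*s^2*u*s⁻¹ + s^2*u*ξp*s⁻¹ - s^2*u^2 - 6*s^2*u^2*s⁻¹ + 4*s^2*u^2*ξp*s⁻¹ - 4*s^2*u^3 - 8*s^2*u^3*s⁻¹ + 6*s^2*u^3*ξp*s⁻¹ - 6*s^2*u^4 - 6*s^2*u^4*s⁻¹ + 4*s^2*u^4*ξp*s⁻¹ - 4*s^2*u^5 - 2*s^2*u^5*s⁻¹ + s^2*u^5*ξp*s⁻¹ - s^2*u^6 + s^3*u^2*s⁻¹ + 4*s^3*u^3*s⁻¹ + 6*s^3*u^4*s⁻¹ + 4*s^3*u^5*s⁻¹ + s^3*u^6*s⁻¹) * hs1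
    · linear_combination (norm := ring1) (2 - 2*u^2*s⁻¹^2 + 4*s*u*s⁻¹^2 + 8*s*u^2*s⁻¹^2 + 4*s*u^3*s⁻¹^2 - 2*s^2*s⁻¹^2 - 8*s^2*u*s⁻¹^2 - 12*s^2*u^2*s⁻¹^2 - 8*s^2*u^3*s⁻¹^2 - 2*s^2*u^4*s⁻¹^2) * hprod + (-2 + 2*u^2*s⁻¹ + 2*u^3*s⁻¹ + 2*s*u - 2*s*u*s⁻¹ - 2*s*u*s⁻¹^2 - 8*s*u^2*s⁻¹ - 2*s*u^2*s⁻¹^2 - 10*s*u^3*s⁻¹ - 2*s*u^3*s⁻¹^2 - 4*s*u^4*s⁻¹ + 2*s^2*s⁻¹^2 + 2*s^2*u*s⁻¹ + 6*s^2*u*s⁻¹^2 + 8*s^2*u^2*s⁻¹ + 10*s^2*u^2*s⁻¹^2 + 12*s^2*u^3*s⁻¹ + 10*s^2*u^3*s⁻¹^2 + 8*s^2*u^4*s⁻¹ + 4*s^2*u^4*s⁻¹^2 + 2*s^2*u^5*s⁻¹ - 2*s^3*u*s⁻¹^2 - 8*s^3*u^2*s⁻¹^2 - 12*s^3*u^3*s⁻¹^2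 - 8*s^3*u^4*s⁻¹^2 - 2*s^3*u^5*s⁻¹^2) * hsum + (4*u - 2*u*s⁻¹ + 4*u^2 - 4*u^2*s⁻¹ + 2*u^2*s⁻¹^2 + 4*u^3 - 8*u^3*s⁻¹ + 2*u^3*s⁻¹^2 + 2*u^4 - 6*u^4*s⁻¹ + 2*u^4*s⁻¹^2 - 2*u^5*s⁻¹ - 2*s*u + 4*s*u*s⁻¹ - 2*s*u*s⁻¹^2 - 8*s*u^2 + 18*s*u^2*s⁻¹ - 6*s*u^2*s⁻¹^2 - 14*s*u^3 + 36*s*u^3*s⁻¹ - 10*s*u^3*s⁻¹^2 - 12*s*u^4 + 36*s*u^4*s⁻¹ - 10*s*u^4*s⁻¹^2 - 4*s*u^5 + 18*s*u^5*s⁻¹ - 4*s*u^5*s⁻¹^2 + 4*s*u^6*s⁻¹ - 2*s^2*u*s⁻¹ + 2*s^2*u^2 - 14*s^2*u^2*s⁻¹ + 2*s^2*u^2*s⁻¹^2 + 8*s^2*u^3 - 36*s^2*u^3*s⁻¹ + 8*s^2*u^3*s⁻¹^2 + 12*s^2*u^4 - 46*s^2*u^4*s⁻¹ + 12*s^2*u^4*s⁻¹^2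 + 8*s^2*u^5 - 32*s^2*u^5*s⁻¹ + 8*s^2*u^5*s⁻¹^2 + 2*s^2*u^6 - 12*s^2*u^6*s⁻¹ + 2*s^2*u^6*s⁻¹^2 - 2*s^2*u^7*s⁻¹) * hs1
    · linear_combination (norm := ring1) (-4 + 4*ξp - ξp^2 - 16*u + 8*u*s⁻¹ + 6*u*ξp - 3*u*ξp*s⁻¹ - 20*u^2 + 12*u^2*s⁻¹ - 2*u^2*s⁻¹^2 + 3*u^2*ξp - 12*u^3 + 6*u^3*s⁻¹ - 3*u^4 + 2*s*u - 2*s*u*s⁻¹^2 - s*u*ξp + 4*s*u^2 - 2*s*u^2*s⁻¹ - 4*s*u^2*s⁻¹^2 + 2*s*u^3 - 2*s*u^3*s⁻¹^2 + s^2*s⁻¹^2 + 4*s^2*u*s⁻¹^2 + 6*s^2*u^2*s⁻¹^2 + 4*s^2*u^3*s⁻¹^2 + s^2*u^4*s⁻¹^2) * hprod + (2 + ξm + ξm^3 - ξp - 2*ξp*ξm - ξp*ξm^2 + ξp^2*ξm + 10*u - 5*u*s⁻¹ + 4*u*ξm - 2*u*ξm*s⁻¹ + 2*u*ξm^2 -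 u*ξm^2*s⁻¹ - 4*u*ξp*ξm + 2*u*ξp*ξm*s⁻¹ + 21*u^2 - 14*u^2*s⁻¹ + 2*u^2*s⁻¹^2 + 6*u^2*ξm - 4*u^2*ξm*s⁻¹ + u^2*ξm^2 - 2*u^2*ξp*ξm + 24*u^3 - 18*u^3*s⁻¹ + 4*u^3*s⁻¹^2 + 4*u^3*ξm - 2*u^3*ξm*s⁻¹ + 16*u^4 - 12*u^4*s⁻¹ + 2*u^4*s⁻¹^2 + u^4*ξm + 6*u^5 - 3*u^5*s⁻¹ + u^6 - s*u - 2*s*u*s⁻¹ + 2*s*u*s⁻¹^2 + 2*s*u*ξm*s⁻¹^2 + s*u*ξm^2 - 4*s*u^2 - 6*s*u^2*s⁻¹ + 10*s*u^2*s⁻¹^2 - 2*s*u^2*s⁻¹^3 + 4*s*u^2*ξm*s⁻¹^2 - 6*s*u^3 - 6*s*u^3*s⁻¹ + 12*s*u^3*s⁻¹^2 - 4*s*u^3*s⁻¹^3 + 2*s*u^3*ξm*s⁻¹^2 - 4*s*u^4 - 2*s*u^4*s⁻¹ + 8*s*u^4*s⁻¹^2 - 2*s*u^4*s⁻¹^3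 - s*u^5 + 2*s*u^5*s⁻¹^2 - s^2*ξm*s⁻¹^2 + 2*s^2*u*s⁻¹ - 4*s^2*u*s⁻¹^2 + s^2*u*s⁻¹^3 - 4*s^2*u*ξm*s⁻¹^2 + 8*s^2*u^2*s⁻¹ - 13*s^2*u^2*s⁻¹^2 + 4*s^2*u^2*s⁻¹^3 - 6*s^2*u^2*ξm*s⁻¹^2 + 12*s^2*u^3*s⁻¹ - 18*s^2*u^3*s⁻¹^2 + 6*s^2*u^3*s⁻¹^3 - 4*s^2*u^3*ξm*s⁻¹^2 + 8*s^2*u^4*s⁻¹ - 14*s^2*u^4*s⁻¹^2 + 4*s^2*u^4*s⁻¹^3 - s^2*u^4*ξm*s⁻¹^2 + 2*s^2*u^5*s⁻¹ - 6*s^2*u^5*s⁻¹^2 + s^2*u^5*s⁻¹^3 - s^2*u^6*s⁻¹^2 - s^3*u*s⁻¹^2 - 4*s^3*u^2*s⁻¹^2 - 6*s^3*u^3*s⁻¹^2 - 4*s^3*u^4*s⁻¹^2 - s^3*u^5*s⁻¹^2) * hsum + (-8*u + 4*u*s⁻¹ + 6*u*ξp - 3*u*ξp*s⁻¹ - 43*u^2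 + 36*u^2*s⁻¹ - 7*u^2*s⁻¹^2 + 19*u^2*ξp - 14*u^2*ξp*s⁻¹ + 2*u^2*ξp*s⁻¹^2 - 86*u^3 + 84*u^3*s⁻¹ - 26*u^3*s⁻¹^2 + 2*u^3*s⁻¹^3 + 24*u^3*ξp - 18*u^3*ξp*s⁻¹ + 4*u^3*ξp*s⁻¹^2 - 97*u^4 + 98*u^4*s⁻¹ - 32*u^4*s⁻¹^2 + 4*u^4*s⁻¹^3 + 16*u^4*ξp - 12*u^4*ξp*s⁻¹ + 2*u^4*ξp*s⁻¹^2 - 68*u^5 + 64*u^5*s⁻¹ - 20*u^5*s⁻¹^2 + 2*u^5*s⁻¹^3 + 6*u^5*ξp - 3*u^5*ξp*s⁻¹ - 30*u^6 + 24*u^6*s⁻¹ - 5*u^6*s⁻¹^2 + u^6*ξp - 8*u^7 + 4*u^7*s⁻¹ - u^8 + 2*s*u - 6*s*u*s⁻¹ + 2*s*u*s⁻¹^2 - s*u*ξp + 4*s*u*ξp*s⁻¹ - s*u*ξp*s⁻¹^2 + 14*s*u^2 - 35*s*u^2*s⁻¹ + 14*s*u^2*s⁻¹^2 - s*u^2*s⁻¹^3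 - 4*s*u^2*ξp + 13*s*u^2*ξp*s⁻¹ - 4*s*u^2*ξp*s⁻¹^2 + 34*s*u^3 - 82*s*u^3*s⁻¹ + 36*s*u^3*s⁻¹^2 - 4*s*u^3*s⁻¹^3 - 6*s*u^3*ξp + 18*s*u^3*ξp*s⁻¹ - 6*s*u^3*ξp*s⁻¹^2 + 42*s*u^4 - 101*s*u^4*s⁻¹ + 46*s*u^4*s⁻¹^2 - 6*s*u^4*s⁻¹^3 - 4*s*u^4*ξp + 14*s*u^4*ξp*s⁻¹ - 4*s*u^4*ξp*s⁻¹^2 + 30*s*u^5 - 74*s*u^5*s⁻¹ + 32*s*u^5*s⁻¹^2 - 4*s*u^5*s⁻¹^3 - s*u^5*ξp + 6*s*u^5*ξp*s⁻¹ - s*u^5*ξp*s⁻¹^2 + 12*s*u^6 - 32*s*u^6*s⁻¹ + 12*s*u^6*s⁻¹^2 - s*u^6*s⁻¹^3 + s*u^6*ξp*s⁻¹ + 2*s*u^7 - 8*s*u^7*s⁻¹ + 2*s*u^7*s⁻¹^2 - s*u^8*s⁻¹ + s^2*u*ξp*s⁻¹ + 4*s^2*u^2*ξp*s⁻¹ +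 6*s^2*u^3*ξp*s⁻¹ + 4*s^2*u^4*ξp*s⁻¹ + s^2*u^5*ξp*s⁻¹) * hs1
  have hP0 : (!![-(u + 1 - 1/s), 2 * (u + 1 - 1/s), (u + 1 - 1/s);
         (1 - s * u - ξp), -((1 - s * u - ξp) + (1 - s * u - ξm)), -(1 - s * u - ξm);
         (1 - s * u - ξp) ^ 2 / (u + 1 - 1/s), -(2 * (1 - s * u - ξp) * (1 - s * u - ξm)) / (u + 1 - 1/s), -((1 - s * u - ξm) ^ 2) / (u + 1 - 1/s)] : Matrix (Fin 3) (Fin 3) ℂ)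
      = (1 / (u + 1 - 1/s)) • !![-(u + 1 - 1/s)^2, 2*(u + 1 - 1/s)^2, (u + 1 - 1/s)^2;
       (u + 1 - 1/s)*(1 - s*u - ξp), -((u + 1 - 1/s)*((1 - s*u - ξp) + (1 - s*u - ξm))), -((u + 1 - 1/s)*(1 - s*u - ξm));
       (1 - s*u - ξp)^2, -(2*(1 - s*u - ξp)*(1 - s*u - ξm)), -((1 - s*u - ξm)^2)] := by
    have hd1 : (u + 1 - 1/s) * (u + 1 - 1/s)⁻¹ = 1 := mul_inv_cancel₀ hδ0
    ext i j
    fin_cases i <;> fin_cases j <;> simp [Matrix.smul_apply]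
    · linear_combination (norm := ring1) (u + 1 - 1/s) * hd1
    · linear_combination (norm := ring1) (-2*(u + 1 - 1/s)) * hd1
    · linear_combination (norm := ring1) (-(u + 1 - 1/s)) * hd1
    · linear_combination (norm := ring1) (-(1 - s*u - ξp)) * hd1
    · linear_combination (norm := ring1) ((1 - s*u - ξp) + (1 - s*u - ξm)) * hd1
    · linear_combination (norm := ring1) (1 - s*u - ξm) * hd1
    · linear_combination (norm := ring1) (0:ℂ) * hd1
    · linear_combination (norm := ring1) (0:ℂ) * hd1
    · linear_combination (norm := ring1) (0:ℂ) * hd1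
  have h1 : W * P = P * Matrix.diagonal ![ξp ^ 2, 1, ξm ^ 2] := by
    rw [hP, hP0, Matrix.mul_smul, Matrix.mul_smul, key2, Matrix.smul_mul, Matrix.smul_mul]
  refine ⟨h1, fun hdet => ?_⟩
  rw [Matrix.mul_assoc, h1, ← Matrix.mul_assoc, Matrix.nonsing_inv_mul P hdet, Matrix.one_mul]
end

section
/- Let n be an integer, s, u ∈ ℂ with s ≠ 0, and ξ₊, ξ₋ ∈ ℂ with ξ₊·ξ₋ = 1 and ξ₊ ≠ ξ₋. Set γ = ξ₊ + ξ₋, X = (ξ₊ⁿ − ξ₋ⁿ)/(ξ₊ − ξ₋), Y = (ξ₊^{n−1} − ξ₋^{n−1})/(ξ₊ − ξ₋), and c = s + 1/s − 1 − u. If Y = c·X, then X²·(1 − c·γ + c²) = 1; in particular 1 − c·γ + c² ≠ 0 and X² = 1/(1 − (s+1/s−1−u)·γ + (s+1/s−1−u)²). -/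
/-- Lemma 4.4 of the paper: on the Riley variety (`Y = cX` with
`c = s + 1/s − 1 − u`), one has `X²(1 − cγ + c²) = 1`; in particular
`1 − cγ + c² ≠ 0` and `X² = 1/(1 − (s+1/s−1−u)γ + (s+1/s−1−u)²)`. -/
theorem twist_knot_X_squared
    (n : ℤ) (s u : ℂ) (hs : s ≠ 0)
    (ξp ξm : ℂ) (hprod : ξp * ξm = 1) (hne : ξp ≠ ξm)
    (γ X Y c : ℂ)
    (hγ : γ = ξp + ξm)
    (hX : X = (ξp ^ n - ξm ^ n) / (ξp - ξm))
    (hY : Y = (ξp ^ (n - 1) - ξm ^ (n - 1)) / (ξp - ξm))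
    (hc : c = s + 1 / s - 1 - u)
    (hRiley : Y = c * X) :
    X ^ 2 * (1 - c * γ + c ^ 2) = 1 ∧
    1 - c * γ + c ^ 2 ≠ 0 ∧
    X ^ 2 = 1 / (1 - (s + 1 / s - 1 - u) * γ + (s + 1 / s - 1 - u) ^ 2) := by
  have ha : ξp ≠ 0 := left_ne_zero_of_mul_eq_one hprod
  have hb : ξm ≠ 0 := right_ne_zero_of_mul_eq_one hprod
  have hd : ξp - ξm ≠ 0 := sub_ne_zero.mpr hne
  have hinv1 : ξp⁻¹ = ξm := inv_eq_of_mul_eq_one_right hprod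
  have hinv2 : ξm⁻¹ = ξp := inv_eq_of_mul_eq_one_right (by rw [mul_comm]; exact hprod)
  have hAB : ξp ^ n * ξm ^ n = 1 := by rw [← mul_zpow, hprod, one_zpow]
  have hA1 : ξp ^ (n - 1) = ξp ^ n * ξm := by rw [zpow_sub_one₀ ha, hinv1]
  have hB1 : ξm ^ (n - 1) = ξm ^ n * ξp := by rw [zpow_sub_one₀ hb, hinv2]
  have key : X ^ 2 - γ * X * Y + Y ^ 2 = 1 := by
    subst hX hY hγ
    rw [hA1, hB1]
    set A := ξp ^ n
    set B := ξm ^ n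
    have hnum : (A - B) ^ 2 - (ξp + ξm) * (A - B) * (A * ξm - B * ξp)
        + (A * ξm - B * ξp) ^ 2 = (ξp - ξm) ^ 2 := by
      linear_combination (2 - A ^ 2 - B ^ 2) * hprod + (ξp ^ 2 + ξm ^ 2 - 2) * hAB
    have hrw : ((A - B) / (ξp - ξm)) ^ 2
        - (ξp + ξm) * ((A - B) / (ξp - ξm)) * ((A * ξm - B * ξp) / (ξp - ξm))
        + ((A * ξm - B * ξp) / (ξp - ξm)) ^ 2
        = ((A - B) ^ 2 - (ξp + ξm) * (A - B) * (A * ξm - B * ξp)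
            + (A * ξm - B * ξp) ^ 2) / (ξp - ξm) ^ 2 := by
      field_simp
    rw [hrw, hnum, div_self (pow_ne_zero 2 hd)]
  have main : X ^ 2 * (1 - c * γ + c ^ 2) = 1 := by
    rw [hRiley] at key; linear_combination key
  refine ⟨main, ?_, ?_⟩
  · intro h; rw [h, mul_zero] at main; exact one_ne_zero main.symm
  · have hne2 : 1 - c * γ + c ^ 2 ≠ 0 := by
      intro h; rw [h, mul_zero] at main; exact one_ne_zero main.symm
    rw [← hc]
    field_simp
    linear_combination main
end
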